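/- Let T be a spherically homogeneous rooted tree, let G ≤ Aut(T) be a branch group, and let N be a nontrivial normal subgroup of G. Then the quotient G/N has property BF: every subgroup of G/N of finite bi-index has finite index in G/N. -/

import Mathlib

/-!
A nontrivial normal subgroup `N` of `G` contains an element moving some vertex `u`, and by
normality and spherical transitivity it then contains, for every vertex `v` on the level of `u`,
an element moving `v`. This forces the rigid stabilisers of that level to become abelian and to
commute with each other in `G ⧸ N`, so the image of the rigid level stabiliser is an abelian
subgroup of finite index in `G ⧸ N`. A group `Q` with an abelian subgroup `A` of finite index
has property BF: for `K` of finite bi-index and `B = K ⊓ A`, a double coset `KgK` with `g ∈ A`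
lies in `T g T B` for a finite transversal `T` of `B` in `K`, so `Q` is a finite union of
left cosets of `B`.
-/

open scoped Pointwise

/-! ## Spherically homogeneous rooted trees -/

/-- A vertex of the spherically homogeneous rooted tree over the shifted sequence of
alphabets `i ↦ A (i + k)`: a finite word whose `j`-th letter belongs to `A (j + k)`. -/
def Vtx (A : ℕ → Type*) (k : ℕ) : Type _ :=
  {l : List (Σ i, A i) // ∀ j (h : j < l.length), (l[j]'h).1 = j + k}

namespace Vtx

variable {A : ℕ → Type*}

/-- The length of a vertex (the distance to the root). -/
def len {k : ℕ} (v : Vtx A k) : ℕ := v.1.length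

/-- The prefix relation on vertices. -/
def Pre {k : ℕ} (v w : Vtx A k) : Prop := v.1 <+: w.1

/-- The `n`-th level of the tree: all vertices of length `n`. -/
def level (A : ℕ → Type*) (k : ℕ) (n : ℕ) : Set (Vtx A k) := {v | v.len = n}

/-- Concatenation of a vertex of the tree with a word over the shifted alphabets. -/
def cat (v : Vtx A 0) (w : Vtx A v.len) : Vtx A 0 :=
  ⟨v.1 ++ w.1, by
    intro j h
    by_cases hj : j < v.1.length
    · rw [List.getElem_append_left hj]
      exact v.2 j hj
    · push_neg at hj
      rw [List.getElem_append_right hj]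
      have h2 : j - v.1.length < w.1.length := by
        have h3 := h
        simp only [List.length_append] at h3
        omega
      exact (w.2 (j - v.1.length) h2).trans
        (by show j - v.1.length + v.1.length = j + 0; omega)⟩

/-- Deleting a prefix of length `n` from a vertex. -/
def dropPre (n : ℕ) (u : Vtx A 0) : Vtx A n :=
  ⟨u.1.drop n, by
    intro j h
    have h' : n + j < u.1.length := by
      simp only [List.length_drop] at h
      omega
    rw [List.getElem_drop]
    exact (u.2 (n + j) h').trans (by omega)⟩

end Vtx

/-- The full automorphism group of the rooted tree `T_k`:
bijections of the vertex set preserving word length and the prefix relation. -/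
def treeAut (A : ℕ → Type*) (k : ℕ) : Subgroup (Equiv.Perm (Vtx A k)) where
  carrier := {f | (∀ v, (f v).len = v.len) ∧ ∀ v w, Vtx.Pre (f v) (f w) ↔ Vtx.Pre v w}
  one_mem' := ⟨fun _ => rfl, fun _ _ => Iff.rfl⟩
  mul_mem' := by
    rintro f g ⟨hf1, hf2⟩ ⟨hg1, hg2⟩
    constructor
    · intro v
      have : (f * g) v = f (g v) := rfl
      rw [this]
      exact (hf1 (g v)).trans (hg1 v)
    · intro v w
      have e1 : (f * g) v = f (g v) := rfl
      have e2 : (f * g) w = f (g w) := rfl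
      rw [e1, e2]
      exact (hf2 (g v) (g w)).trans (hg2 v w)
  inv_mem' := by
    rintro f ⟨hf1, hf2⟩
    constructor
    · intro v
      conv_rhs => rw [← (Equiv.apply_symm_apply f v : f (f⁻¹ v) = v)]
      exact (hf1 _).symm
    · intro v w
      conv_rhs => rw [← (Equiv.apply_symm_apply f v : f (f⁻¹ v) = v), ← (Equiv.apply_symm_apply f w : f (f⁻¹ w) = w)]
      exact (hf2 _ _).symm

variable {A : ℕ → Type*}

/-- The stabiliser `St_H(v)` of a vertex `v` in a subgroup `H ≤ Perm`. -/
def vstab {k : ℕ} (H : Subgroup (Equiv.Perm (Vtx A k))) (v : Vtx A k) :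
    Subgroup (Equiv.Perm (Vtx A k)) where
  carrier := {g | g ∈ H ∧ g v = v}
  one_mem' := ⟨H.one_mem, rfl⟩
  mul_mem' := by
    rintro a b ⟨ha, ha'⟩ ⟨hb, hb'⟩
    refine ⟨H.mul_mem ha hb, ?_⟩
    have : (a * b) v = a (b v) := rfl
    rw [this, hb', ha']
  inv_mem' := by
    rintro a ⟨ha, ha'⟩
    refine ⟨H.inv_mem ha, ?_⟩
    conv_lhs => rw [← ha']
    exact Equiv.symm_apply_apply a v

/-- The stabiliser `St_H(n)` of the `n`-th level. -/
def levStab {k : ℕ} (H : Subgroup (Equiv.Perm (Vtx A k))) (n : ℕ) :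
    Subgroup (Equiv.Perm (Vtx A k)) where
  carrier := {g | g ∈ H ∧ ∀ v : Vtx A k, v.len = n → g v = v}
  one_mem' := ⟨H.one_mem, fun _ _ => rfl⟩
  mul_mem' := by
    rintro a b ⟨ha, ha'⟩ ⟨hb, hb'⟩
    refine ⟨H.mul_mem ha hb, fun v hv => ?_⟩
    have : (a * b) v = a (b v) := rfl
    rw [this, hb' v hv, ha' v hv]
  inv_mem' := by
    rintro a ⟨ha, ha'⟩
    refine ⟨H.inv_mem ha, fun v hv => ?_⟩
    conv_lhs => rw [← ha' v hv]
    exact Equiv.symm_apply_apply a v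

/-- The rigid stabiliser `rist_H(v)`: elements of `H` fixing every vertex that does not
have `v` as a prefix. -/
def rist {k : ℕ} (H : Subgroup (Equiv.Perm (Vtx A k))) (v : Vtx A k) :
    Subgroup (Equiv.Perm (Vtx A k)) where
  carrier := {g | g ∈ H ∧ ∀ w : Vtx A k, ¬ Vtx.Pre v w → g w = w}
  one_mem' := ⟨H.one_mem, fun _ _ => rfl⟩
  mul_mem' := by
    rintro a b ⟨ha, ha'⟩ ⟨hb, hb'⟩
    refine ⟨H.mul_mem ha hb, fun w hw => ?_⟩
    have : (a * b) w = a (b w) := rfl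
    rw [this, hb' w hw, ha' w hw]
  inv_mem' := by
    rintro a ⟨ha, ha'⟩
    refine ⟨H.inv_mem ha, fun w hw => ?_⟩
    conv_lhs => rw [← ha' w hw]
    exact Equiv.symm_apply_apply a w

/-- The rigid level stabiliser `rist_H(n)`: the subgroup generated by the rigid
stabilisers of the vertices on the `n`-th level. -/
def ristLev {k : ℕ} (H : Subgroup (Equiv.Perm (Vtx A k))) (n : ℕ) :
    Subgroup (Equiv.Perm (Vtx A k)) :=
  ⨆ v ∈ {v : Vtx A k | v.len = n}, rist H v

/-- `G` acts spherically transitively: transitively on every level of the tree. -/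
def SphTrans {k : ℕ} (G : Subgroup (Equiv.Perm (Vtx A k))) : Prop :=
  ∀ v w : Vtx A k, v.len = w.len → ∃ g ∈ G, g v = w

/-- `G ≤ Aut(T_k)` is a branch group. -/
structure IsBranch {k : ℕ} (G : Subgroup (Equiv.Perm (Vtx A k))) : Prop where
  le_aut : G ≤ treeAut A k
  trans : SphTrans G
  rist_fi : ∀ n : ℕ, (ristLev G n).relIndex G ≠ 0

/-- `G ≤ Aut(T_k)` is a weakly branch group. -/
structure IsWeaklyBranch {k : ℕ} (G : Subgroup (Equiv.Perm (Vtx A k))) : Prop where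
  le_aut : G ≤ treeAut A k
  trans : SphTrans G
  rist_nt : ∀ n : ℕ, ristLev G n ≠ ⊥

/-! ## Sections -/

namespace Vtx

theorem dropPre_cat (v : Vtx A 0) (w : Vtx A v.len) : dropPre v.len (cat v w) = w := by
  apply Subtype.ext
  show (v.1 ++ w.1).drop v.1.length = w.1
  exact List.drop_left (l₁ := v.1) (l₂ := w.1)

theorem pre_cat (v : Vtx A 0) (w : Vtx A v.len) : Pre v (cat v w) := ⟨w.1, rfl⟩

theorem cat_dropPre {v u : Vtx A 0} (h : Pre v u) : cat v (dropPre v.len u) = u := by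
  apply Subtype.ext
  show v.1 ++ u.1.drop v.1.length = u.1
  obtain ⟨t, ht⟩ := h
  rw [← ht, List.drop_left]

end Vtx

/-- The section map `φ_v` at the level of plain functions. -/
def secFun (v : Vtx A 0) (f : Equiv.Perm (Vtx A 0)) : Vtx A v.len → Vtx A v.len :=
  fun w => Vtx.dropPre v.len (f (Vtx.cat v w))

theorem secFun_key {v : Vtx A 0} {f : Equiv.Perm (Vtx A 0)}
    (hf : f ∈ vstab (treeAut A 0) v) (w : Vtx A v.len) :
    Vtx.cat v (secFun v f w) = f (Vtx.cat v w) := by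
  obtain ⟨⟨hlen, hpre⟩, hfix⟩ := hf
  apply Vtx.cat_dropPre
  have := (hpre v (Vtx.cat v w))
  rw [hfix] at this
  exact this.mpr (Vtx.pre_cat v w)

theorem secFun_mul {v : Vtx A 0} {f g : Equiv.Perm (Vtx A 0)}
    (hf : f ∈ vstab (treeAut A 0) v) (hg : g ∈ vstab (treeAut A 0) v) :
    secFun v (f * g) = secFun v f ∘ secFun v g := by
  funext w
  show Vtx.dropPre v.len ((f * g) (Vtx.cat v w)) = Vtx.dropPre v.len (f (Vtx.cat v (secFun v g w)))
  rw [secFun_key hg w]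
  rfl

theorem secFun_one (v : Vtx A 0) : secFun v (1 : Equiv.Perm (Vtx A 0)) = id := by
  funext w
  show Vtx.dropPre v.len ((1 : Equiv.Perm (Vtx A 0)) (Vtx.cat v w)) = w
  rw [Equiv.Perm.one_apply]
  exact Vtx.dropPre_cat v w

theorem secFun_bij {v : Vtx A 0} {f : Equiv.Perm (Vtx A 0)}
    (hf : f ∈ vstab (treeAut A 0) v) : Function.Bijective (secFun v f) := by
  rw [Function.bijective_iff_has_inverse]
  refine ⟨secFun v f⁻¹, fun w => ?_, fun w => ?_⟩
  · have h1 := congrFun (secFun_mul (inv_mem hf) hf) w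
    rw [inv_mul_cancel, secFun_one] at h1
    exact h1.symm
  · have h1 := congrFun (secFun_mul hf (inv_mem hf)) w
    rw [mul_inv_cancel, secFun_one] at h1
    exact h1.symm

open Classical in
noncomputable def secPerm (v : Vtx A 0) (f : Equiv.Perm (Vtx A 0)) :
    Equiv.Perm (Vtx A v.len) :=
  if h : Function.Bijective (secFun v f) then Equiv.ofBijective _ h else 1

theorem secPerm_coe {v : Vtx A 0} {f : Equiv.Perm (Vtx A 0)}
    (hf : f ∈ vstab (treeAut A 0) v) : ⇑(secPerm v f) = secFun v f := by
  unfold secPerm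
  rw [dif_pos (secFun_bij hf)]
  rfl

/-- The section homomorphism `φ_v : St_{Aut(T)}(v) → Perm(T_{|v|})`. -/
noncomputable def phiHom (v : Vtx A 0) :
    ↥(vstab (treeAut A 0) v) →* Equiv.Perm (Vtx A v.len) where
  toFun f := secPerm v f.1
  map_one' := by
    apply Equiv.ext
    intro w
    show secPerm v (1 : Equiv.Perm (Vtx A 0)) w = (1 : Equiv.Perm (Vtx A v.len)) w
    rw [secPerm_coe (one_mem (vstab (treeAut A 0) v)), secFun_one]
    rfl
  map_mul' := by
    intro f g
    apply Equiv.ext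
    intro w
    show secPerm v (f.1 * g.1) w = (secPerm v f.1 * secPerm v g.1) w
    have e : (secPerm v f.1 * secPerm v g.1) w = secPerm v f.1 (secPerm v g.1 w) := rfl
    rw [e, secPerm_coe (mul_mem f.2 g.2), secPerm_coe f.2, secPerm_coe g.2,
      secFun_mul f.2 g.2]
    rfl

/-- The image `φ_v(St_H(v)) ≤ Perm(T_{|v|})` of the stabiliser of `v` in `H` under the
section homomorphism at `v`; for `H ≤ G ≤ Aut(T)` this is the subgroup written `H_v`. -/
noncomputable def secSub (v : Vtx A 0) (H : Subgroup (Equiv.Perm (Vtx A 0))) :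
    Subgroup (Equiv.Perm (Vtx A v.len)) :=
  Subgroup.map (phiHom v) ((vstab H v).subgroupOf (vstab (treeAut A 0) v))

/-- A subgroup `H ≤ G` has finite bi-index if the set of double cosets
`{HgH : g ∈ G}` is finite. -/
def FiniteBiIndex {G : Type*} [Group G] (H : Subgroup G) : Prop :=
  {S : Set G | ∃ g : G, S = (H : Set G) * {g} * (H : Set G)}.Finite

/-- The set of double cosets of a subgroup `H` of a group `M` with representatives in a
subgroup `G` of `M`; for `H ≤ G` this is the set of double cosets `H\G/H`. -/
def doubleCosets {M : Type*} [Group M] (G H : Subgroup M) : Set (Set M) :=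
  {S : Set M | ∃ g ∈ G, S = (H : Set M) * {g} * (H : Set M)}

/-- The pro-normal closure of a subgroup `H ≤ G`: the intersection of the subsets `HN`,
over all nontrivial normal subgroups `N` of `G`. -/
def pronormalClosure {G : Type*} [Group G] (H : Subgroup G) : Subgroup G where
  carrier := ⋂ N ∈ {N : Subgroup G | N.Normal ∧ N ≠ ⊥}, (H : Set G) * (N : Set G)
  one_mem' := by
    simp only [Set.mem_iInter]
    rintro N ⟨hN, -⟩
    exact ⟨1, H.one_mem, 1, N.one_mem, mul_one 1⟩
  mul_mem' := by
    intro a b ha hb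
    simp only [Set.mem_iInter] at ha hb ⊢
    rintro N hN
    obtain ⟨h₁, hh₁, n₁, hn₁, rfl⟩ := ha N hN
    obtain ⟨h₂, hh₂, n₂, hn₂, rfl⟩ := hb N hN
    refine ⟨h₁ * h₂, H.mul_mem hh₁ hh₂, (h₂⁻¹ * n₁ * h₂) * n₂, ?_, by group⟩
    refine N.mul_mem ?_ hn₂
    have := hN.1.conj_mem n₁ hn₁ h₂⁻¹
    simpa using this
  inv_mem' := by
    intro a ha
    simp only [Set.mem_iInter] at ha ⊢
    rintro N hN
    obtain ⟨h, hh, n, hn, rfl⟩ := ha N hN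
    refine ⟨h⁻¹, H.inv_mem hh, h * n⁻¹ * h⁻¹, hN.1.conj_mem n⁻¹ (N.inv_mem hn) h, by group⟩

/-- A subgroup `H ≤ G` is quasi-prodense if its pro-normal closure has finite index. -/
def QuasiProdense {G : Type*} [Group G] (H : Subgroup G) : Prop :=
  (pronormalClosure H).index ≠ 0

/-- `K` is a normal subgroup of the subgroup `H` (both subgroups of an ambient group). -/
def NormalIn {M : Type*} [Group M] (H K : Subgroup M) : Prop :=
  K ≤ H ∧ ∀ h ∈ H, ∀ k ∈ K, h * k * h⁻¹ ∈ K

/-- `K` is a subnormal subgroup of the subgroup `H`. -/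
def SubnormalIn {M : Type*} [Group M] (H K : Subgroup M) : Prop :=
  ∃ (m : ℕ) (c : ℕ → Subgroup M), c 0 = K ∧ c m = H ∧ ∀ i < m, NormalIn (c (i + 1)) (c i)

/-- The iterated derived subgroups of a subgroup. -/
def iterDerived {M : Type*} [Group M] (H : Subgroup M) : ℕ → Subgroup M
  | 0 => H
  | (k + 1) => ⁅iterDerived H k, iterDerived H k⁆

namespace Subgroup

variable {Q : Type*} [Group Q]

theorem exists_finite_subset_mul_of_relIndex_ne_zero {D H : Subgroup Q} (h : D.relIndex H ≠ 0) :
    ∃ T : Set Q, T.Finite ∧ (H : Set Q) ⊆ T * D := by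
  have : Finite (H ⧸ D.subgroupOf H) := index_ne_zero_iff_finite.mp h
  refine ⟨Set.range fun q : H ⧸ D.subgroupOf H => (q.out : Q), Set.finite_range _, ?_⟩
  intro x hx
  obtain ⟨d, hd⟩ := QuotientGroup.mk_out_eq_mul (D.subgroupOf H) ⟨x, hx⟩
  refine Set.mem_mul.mpr ⟨_, ⟨QuotientGroup.mk ⟨x, hx⟩, rfl⟩, _,
    D.inv_mem (mem_subgroupOf.mp d.2), ?_⟩
  simp [hd]

theorem finiteIndex_of_univ_subset_mul {H : Subgroup Q} {F : Set Q} (hF : F.Finite)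
    (h : Set.univ ⊆ F * (H : Set Q)) : H.FiniteIndex := by
  suffices (Set.univ : Set (Q ⧸ H)).Finite from
    have := Set.finite_univ_iff.mp this
    finiteIndex_of_finite_quotient
  refine (hF.image QuotientGroup.mk).subset fun q _ => ?_
  obtain ⟨x, rfl⟩ := QuotientGroup.mk_surjective q
  obtain ⟨f, hf, y, hy, rfl⟩ := h (Set.mem_univ x)
  exact ⟨f, hf, QuotientGroup.eq.mpr (by simpa using hy)⟩

theorem doubleCoset_subset_mul {K B : Subgroup Q} (hBK : B ≤ K) {T : Set Q}
    (hT : (K : Set Q) ⊆ T * B) {g : Q} (hg : ∀ b ∈ B, Commute g b) :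
    (K : Set Q) * {g} * K ⊆ T * {g} * T * B := by
  rintro _ ⟨_, ⟨k, hk, g', hg', rfl⟩, k', hk', rfl⟩
  rw [Set.mem_singleton_iff] at hg'
  subst g'
  obtain ⟨t, ht, b, hb, rfl⟩ := hT hk
  obtain ⟨t', ht', b', hb', hbk⟩ := hT (K.mul_mem (hBK hb) hk')
  refine ⟨t * g * t', ⟨t * g, ⟨t, ht, g, rfl, rfl⟩, t', ht', rfl⟩, b', hb', ?_⟩
  calc t * g * t' * b' = t * g * (b * k') := by rw [mul_assoc]; exact congrArg (t * g * ·) hbk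
    _ = t * b * g * k' := by rw [mul_assoc t g, ← mul_assoc g, (hg b hb).eq]; group

theorem biSup_subgroupOf {ι : Type*} {S : Set ι} {H : ι → Subgroup Q}
    {K : Subgroup Q} (hHK : ∀ i ∈ S, H i ≤ K) :
    (⨆ i ∈ S, H i).subgroupOf K = ⨆ i ∈ S, (H i).subgroupOf K := by
  refine map_injective K.subtype_injective ?_
  simp only [subgroupOf_map_subtype, map_iSup]
  rw [inf_eq_left.mpr (iSup₂_le hHK)]
  exact iSup_congr fun i => iSup_congr fun hi => (inf_eq_left.mpr (hHK i hi)).symm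

theorem biSup_le_centralizer {ι : Type*} {S : Set ι} {H : ι → Subgroup Q}
    (hH : ∀ i ∈ S, ∀ j ∈ S, H i ≤ centralizer (H j)) :
    ⨆ i ∈ S, H i ≤ centralizer (⨆ i ∈ S, H i : Subgroup Q) :=
  iSup₂_le fun i hi => le_centralizer_iff.mpr <|
    iSup₂_le fun j hj => hH j hj i hi

end Subgroup

theorem FiniteBiIndex.finiteIndex {Q : Type*} [Group Q] {K : Subgroup Q} (hK : FiniteBiIndex K)
    (A : Subgroup Q) [IsMulCommutative A] [A.FiniteIndex] : K.FiniteIndex := by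
  set B := K ⊓ A
  obtain ⟨T, hT, hKT⟩ :=
    Subgroup.exists_finite_subset_mul_of_relIndex_ne_zero (D := B) (H := K) (by
      rw [Subgroup.inf_relIndex_left]
      exact Subgroup.isFiniteRelIndex_of_finiteIndex.relIndex_ne_zero)
  obtain ⟨R, hR, hQR⟩ :=
    Subgroup.exists_finite_subset_mul_of_relIndex_ne_zero (D := A) (H := ⊤)
      (by rw [Subgroup.relIndex_top_right]; exact Subgroup.FiniteIndex.index_ne_zero)
  -- `G₀ ⊆ A`: one representative of each of the finitely many double cosets meeting `A`
  obtain ⟨G₀, hG₀A, hG₀, hG₀eq⟩ := Set.exists_subset_image_finite_and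
    (f := fun a => (K : Set Q) * {a} * K) (s := A)
    (p := fun t => t = (fun a => (K : Set Q) * {a} * K) '' A) |>.mp
    ⟨_, le_rfl, hK.subset (by rintro _ ⟨a, -, rfl⟩; exact ⟨a, rfl⟩), rfl⟩
  have hA : (A : Set Q) ⊆ T * G₀ * T * B := by
    intro a ha
    obtain ⟨g, hg, hga⟩ :
        (K : Set Q) * {a} * K ∈ (fun a => (K : Set Q) * {a} * K) '' G₀ := by
      rw [hG₀eq]
      exact ⟨a, ha, rfl⟩
    have haK : a ∈ (K : Set Q) * {g} * K := by
      rw [show (K : Set Q) * {g} * K = K * {a} * K from hga]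
      exact ⟨a, ⟨1, K.one_mem, a, rfl, one_mul a⟩, 1, K.one_mem, mul_one a⟩
    refine Set.mul_subset_mul_right (Set.mul_subset_mul_right
      (Set.mul_subset_mul_left (Set.singleton_subset_iff.mpr hg))) ?_
    refine Subgroup.doubleCoset_subset_mul inf_le_left hKT (fun b hb => ?_) haK
    exact setLike_mul_comm (hG₀A hg) hb.2
  have hB : B.FiniteIndex := by
    refine Subgroup.finiteIndex_of_univ_subset_mul (((hR.mul hT).mul hG₀).mul hT) ?_
    calc Set.univ ⊆ R * (A : Set Q) := by simpa using hQR
      _ ⊆ R * (T * G₀ * T * (B : Set Q)) := Set.mul_subset_mul_left hA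
      _ = R * T * G₀ * T * (B : Set Q) := by simp only [mul_assoc]
  exact Subgroup.finiteIndex_of_le (inf_le_left : B ≤ K)

namespace Vtx

theorem eq_of_pre_of_pre {k : ℕ} {u w p : Vtx A k} (hu : Pre u p) (hw : Pre w p)
    (hlen : u.len = w.len) : u = w :=
  Subtype.ext ((List.prefix_of_prefix_length_le hu hw hlen.le).eq_of_length hlen)

end Vtx

section RigidStabiliser

variable {k : ℕ} {G : Subgroup (Equiv.Perm (Vtx A k))} {u w : Vtx A k}
  {x y : Equiv.Perm (Vtx A k)}

theorem pre_apply_of_mem_rist (hx : x ∈ rist G u) {p : Vtx A k} (hp : Vtx.Pre u p) :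
    Vtx.Pre u (x p) := by
  by_contra h
  have hfix : p = x p := (Equiv.symm_apply_apply x p).symm.trans (((rist G u).inv_mem hx).2 _ h)
  exact h (hfix ▸ hp)

theorem commute_of_mem_rist (hlen : u.len = w.len) (hne : u ≠ w) (hx : x ∈ rist G u)
    (hy : y ∈ rist G w) : Commute x y := by
  have hdisj : ∀ p, Vtx.Pre u p → ¬ Vtx.Pre w p := fun p hu hw =>
    hne (Vtx.eq_of_pre_of_pre hu hw hlen)
  refine Equiv.ext fun p => ?_
  simp only [Equiv.Perm.mul_apply]
  by_cases hu : Vtx.Pre u p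
  · rw [hy.2 p (hdisj p hu), hy.2 (x p) (hdisj _ (pre_apply_of_mem_rist hx hu))]
  by_cases hw : Vtx.Pre w p
  · rw [hx.2 p hu, hx.2 (y p) fun h => hdisj _ h (pre_apply_of_mem_rist hy hw)]
  · rw [hx.2 p hu, hy.2 p hw, hx.2 p hu]

theorem conj_mem_rist (hGA : G ≤ treeAut A k) {h : Equiv.Perm (Vtx A k)} (hh : h ∈ G)
    (hx : x ∈ rist G u) : h * x * h⁻¹ ∈ rist G (h u) := by
  refine ⟨G.mul_mem (G.mul_mem hh hx.1) (G.inv_mem hh), fun p hp => ?_⟩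
  have hp' : ¬ Vtx.Pre u (h⁻¹ p) := fun hpre =>
    hp (by simpa using ((hGA hh).2 u (h⁻¹ p)).mpr hpre)
  simp only [Equiv.Perm.mul_apply]
  rw [hx.2 _ hp']
  exact Equiv.apply_symm_apply h p

/-- Modulo `N`, conjugating `x⁻¹` by `g ∈ N` changes nothing, while it moves `x⁻¹` into the
rigid stabiliser of the vertex `g u`, whose elements commute with `y`. -/
theorem commute_mk_of_mem_rist (hGA : G ≤ treeAut A k) {N : Subgroup G} [N.Normal]
    {g : G} (hgN : g ∈ N) (hgu : (g : Equiv.Perm (Vtx A k)) u ≠ u) {x y : G}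
    (hx : (x : Equiv.Perm (Vtx A k)) ∈ rist G u) (hy : (y : Equiv.Perm (Vtx A k)) ∈ rist G u) :
    Commute (x : G ⧸ N) (y : G ⧸ N) := by
  have hconj : ((g * x⁻¹ * g⁻¹ : G) : Equiv.Perm (Vtx A k)) ∈
      rist G ((g : Equiv.Perm (Vtx A k)) u) :=
    conj_mem_rist hGA g.2 ((rist G u).inv_mem hx)
  have hcomm : Commute y (g * x⁻¹ * g⁻¹) :=
    Commute.of_map G.subtype_injective
      (commute_of_mem_rist ((hGA g.2).1 u).symm (Ne.symm hgu) hy hconj)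
  have hg1 : (g : G ⧸ N) = 1 := (QuotientGroup.eq_one_iff g).mpr hgN
  have := hcomm.map (QuotientGroup.mk' N)
  simp only [QuotientGroup.mk'_apply, QuotientGroup.mk_mul, QuotientGroup.mk_inv, hg1,
    one_mul, inv_one, mul_one] at this
  exact (Commute.inv_right_iff.mp this).symm

end RigidStabiliser

theorem SphTrans.exists_level_forall_exists_mem_apply_ne {k : ℕ}
    {G : Subgroup (Equiv.Perm (Vtx A k))} (hG : SphTrans G) {N : Subgroup G} [N.Normal]
    (hN : N ≠ ⊥) :
    ∃ n, ∀ v : Vtx A k, v.len = n → ∃ g ∈ N, (g : Equiv.Perm (Vtx A k)) v ≠ v := by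
  obtain ⟨⟨g, hgN⟩, hg1⟩ := N.ne_bot_iff_exists_ne_one.mp hN
  obtain ⟨u, hu⟩ : ∃ u, (g : Equiv.Perm (Vtx A k)) u ≠ u := by
    by_contra! h
    exact hg1 (Subtype.ext (Subtype.ext (Equiv.ext h)))
  refine ⟨u.len, fun v hv => ?_⟩
  obtain ⟨h, hhG, rfl⟩ := hG u v hv.symm
  refine ⟨⟨h, hhG⟩ * g * ⟨h, hhG⟩⁻¹, ‹N.Normal›.conj_mem g hgN _, ?_⟩
  simpa using hu

theorem isMulCommutative_map_ristLev {k : ℕ} {G : Subgroup (Equiv.Perm (Vtx A k))}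
    (hGA : G ≤ treeAut A k) {N : Subgroup G} [N.Normal] {n : ℕ}
    (hn : ∀ v : Vtx A k, v.len = n → ∃ g ∈ N, (g : Equiv.Perm (Vtx A k)) v ≠ v) :
    IsMulCommutative (((ristLev G n).subgroupOf G).map (QuotientGroup.mk' N)) := by
  rw [← Subgroup.le_centralizer_iff_isMulCommutative, ristLev,
    Subgroup.biSup_subgroupOf fun v _ x (hx : x ∈ rist G v) => hx.1]
  simp only [Subgroup.map_iSup]
  refine Subgroup.biSup_le_centralizer fun v hv w hw => ?_
  rintro _ ⟨x, hx, rfl⟩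
  rw [Subgroup.mem_centralizer_iff]
  rintro _ ⟨y, hy, rfl⟩
  by_cases hvw : v = w
  · subst hvw
    obtain ⟨g, hgN, hgv⟩ := hn v hv
    exact (commute_mk_of_mem_rist hGA hgN hgv hy hx).eq
  · exact ((Commute.of_map G.subtype_injective
      (commute_of_mem_rist (hw.trans hv.symm) (Ne.symm hvw) hy hx)).map _).eq

theorem quotient_of_branch_BF_general
    (A : ℕ → Type*)
    (G : Subgroup (Equiv.Perm (Vtx A 0))) (hG : IsBranch G)
    (N : Subgroup G) [N.Normal] (hN : N ≠ ⊥)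
    (K : Subgroup (G ⧸ N)) (hK : FiniteBiIndex K) : K.index ≠ 0 := by
  obtain ⟨n, hn⟩ := hG.trans.exists_level_forall_exists_mem_apply_ne hN
  set M := ((ristLev G n).subgroupOf G).map (QuotientGroup.mk' N)
  have : IsMulCommutative M := isMulCommutative_map_ristLev hG.le_aut hn
  have : M.FiniteIndex :=
    ⟨ne_zero_of_dvd_ne_zero (hG.rist_fi n)
      (Subgroup.index_map_dvd _ (QuotientGroup.mk'_surjective N))⟩
  exact (hK.finiteIndex M).index_ne_zero

/-- Every proper quotient of a branch group has property `BF`: every subgroup of the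
quotient of finite bi-index has finite index. -/
theorem quotient_of_branch_BF
    (A : ℕ → Type*) [∀ i, Fintype (A i)] (hA : ∀ i, 2 ≤ Fintype.card (A i))
    (G : Subgroup (Equiv.Perm (Vtx A 0))) (hG : IsBranch G)
    (N : Subgroup G) [N.Normal] (hN : N ≠ ⊥)
    (K : Subgroup (G ⧸ N)) (hK : FiniteBiIndex K) : K.index ≠ 0 :=
  quotient_of_branch_BF_general A G hG N hN K hK
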